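/- Let KB = (T, R, A) be a SHIQ knowledge base and Q a union of Boolean conjunctive queries. Then KB does not entail Q without making the unique name assumption if and only if there is an A-partition KB^P = (T, R, A^P) and Q^P w.r.t. KB and Q such that KB^P does not entail Q^P under the unique name assumption. -/

import Mathlib

open scoped Classical

namespace DL

/-! ### Names -/

abbrev ConceptName := ℕ
abbrev RoleName := ℕ
abbrev IndName := ℕ
abbrev Var := ℕ

/-! ### Roles -/

inductive Role where
  | name (r : RoleName)
  | inv  (r : RoleName)
deriving DecidableEq

def Role.inverse : Role → Role
  | .name r => .inv r
  | .inv r  => .name r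

/-- SHIQ^⊓ concepts: quantifiers and number restrictions take a (conjunction of) roles,
given as a list.  SHIQ-concepts are those where every such list is a singleton. -/
inductive Concept where
  | top
  | bot
  | atom (A : ConceptName)
  | neg (C : Concept)
  | conj (C D : Concept)
  | disj (C D : Concept)
  | all (Rs : List Role) (C : Concept)
  | ex (Rs : List Role) (C : Concept)
  | atmost (n : ℕ) (Rs : List Role) (C : Concept)
  | atleast (n : ℕ) (Rs : List Role) (C : Concept)
deriving DecidableEq

/-- A role hierarchy (role box): a finite set of role inclusions together with the
finite set of transitive role names occurring in the knowledge base. -/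
structure RoleBox where
  incl : List (Role × Role)
  trans : List RoleName

def Role.isTransName (N : List RoleName) : Role → Prop
  | .name r => r ∈ N
  | .inv r => r ∈ N

/-- `⊑*`: the reflexive transitive closure of the role inclusions, closed under inverses. -/
def RoleBox.sub (R : RoleBox) : Role → Role → Prop :=
  Relation.ReflTransGen (fun r s => (r, s) ∈ R.incl ∨ (r.inverse, s.inverse) ∈ R.incl)

/-- `Trans(R)`: the set of transitive roles. -/
def RoleBox.transRole (R : RoleBox) (s : Role) : Prop :=
  ∃ r, R.sub r s ∧ R.sub s r ∧ r.isTransName R.trans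

/-- A role is simple if it has no transitive sub-role. -/
def RoleBox.simple (R : RoleBox) (r : Role) : Prop :=
  ∀ s, R.sub s r → ¬ R.transRole s

/-! ### Interpretations and concept semantics -/

structure Interp (D : Type) where
  conceptI : ConceptName → Set D
  roleNameI : RoleName → Set (D × D)
  indI : IndName → D

variable {D : Type}

def Interp.role (I : Interp D) : Role → Set (D × D)
  | .name r => I.roleNameI r
  | .inv r => {p | (p.2, p.1) ∈ I.roleNameI r}

def Interp.roleConj (I : Interp D) (Rs : List Role) : Set (D × D) :=
  {p | ∀ r ∈ Rs, p ∈ I.role r}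

def Concept.interp (I : Interp D) : Concept → Set D
  | .top => Set.univ
  | .bot => ∅
  | .atom A => I.conceptI A
  | .neg C => (C.interp I)ᶜ
  | .conj C C' => C.interp I ∩ C'.interp I
  | .disj C C' => C.interp I ∪ C'.interp I
  | .all Rs C => {d | ∀ e, (d, e) ∈ I.roleConj Rs → e ∈ C.interp I}
  | .ex Rs C => {d | ∃ e, (d, e) ∈ I.roleConj Rs ∧ e ∈ C.interp I}
  | .atmost n Rs C => {d | {e | (d, e) ∈ I.roleConj Rs ∧ e ∈ C.interp I}.encard ≤ (n : ℕ∞)}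
  | .atleast n Rs C => {d | (n : ℕ∞) ≤ {e | (d, e) ∈ I.roleConj Rs ∧ e ∈ C.interp I}.encard}

/-! ### Knowledge bases -/

inductive Assertion where
  | conc (C : Concept) (a : IndName)
  | rel (r : Role) (a b : IndName)
  | nrel (r : Role) (a b : IndName)
  | neq (a b : IndName)
deriving DecidableEq

structure KB where
  tbox : List (Concept × Concept)
  rbox : RoleBox
  abox : List Assertion

def Assertion.inds : Assertion → List IndName
  | .conc _ a => [a]
  | .rel _ a b => [a, b]
  | .nrel _ a b => [a, b]
  | .neq a b => [a, b]

def Assertion.concepts : Assertion → List Concept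
  | .conc C _ => [C]
  | _ => []

def KB.inds (K : KB) : List IndName := (K.abox.map Assertion.inds).flatten

/-- An interpretation satisfies the role hierarchy: all role inclusions hold and
transitive role names are interpreted by transitive relations. -/
def Interp.satRBox (I : Interp D) (R : RoleBox) : Prop :=
  (∀ p ∈ R.incl, I.role p.1 ⊆ I.role p.2) ∧
  (∀ n ∈ R.trans, ∀ a b c : D,
    (a, b) ∈ I.roleNameI n → (b, c) ∈ I.roleNameI n → (a, c) ∈ I.roleNameI n)

def Interp.satAssertion (I : Interp D) : Assertion → Prop
  | .conc C a => I.indI a ∈ C.interp I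
  | .rel r a b => (I.indI a, I.indI b) ∈ I.role r
  | .nrel r a b => (I.indI a, I.indI b) ∉ I.role r
  | .neq a b => I.indI a ≠ I.indI b

def Interp.isModel (I : Interp D) (K : KB) : Prop :=
  (∀ ax ∈ K.tbox, ax.1.interp I ⊆ ax.2.interp I) ∧
  I.satRBox K.rbox ∧
  (∀ A ∈ K.abox, I.satAssertion A)

def KB.Consistent (K : KB) : Prop :=
  ∃ (D : Type) (_ : Nonempty D) (I : Interp D), I.isModel K

/-! ### SHIQ and SHIQ^⊓ well-formedness -/

def Concept.IsSHIQ (R : RoleBox) : Concept → Prop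
  | .top => True
  | .bot => True
  | .atom _ => True
  | .neg C => C.IsSHIQ R
  | .conj C C' => C.IsSHIQ R ∧ C'.IsSHIQ R
  | .disj C C' => C.IsSHIQ R ∧ C'.IsSHIQ R
  | .all Rs C => Rs.length = 1 ∧ C.IsSHIQ R
  | .ex Rs C => Rs.length = 1 ∧ C.IsSHIQ R
  | .atmost _ Rs C => Rs.length = 1 ∧ (∀ r ∈ Rs, R.simple r) ∧ C.IsSHIQ R
  | .atleast _ Rs C => Rs.length = 1 ∧ (∀ r ∈ Rs, R.simple r) ∧ C.IsSHIQ R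

/-- SHIQ^⊓ well-formedness: role conjunctions are non-empty and number restrictions
use simple roles only. -/
def Concept.IsSHIQConj (R : RoleBox) : Concept → Prop
  | .top => True
  | .bot => True
  | .atom _ => True
  | .neg C => C.IsSHIQConj R
  | .conj C C' => C.IsSHIQConj R ∧ C'.IsSHIQConj R
  | .disj C C' => C.IsSHIQConj R ∧ C'.IsSHIQConj R
  | .all Rs C => Rs ≠ [] ∧ C.IsSHIQConj R
  | .ex Rs C => Rs ≠ [] ∧ C.IsSHIQConj R
  | .atmost _ Rs C => Rs ≠ [] ∧ (∀ r ∈ Rs, R.simple r) ∧ C.IsSHIQConj R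
  | .atleast _ Rs C => Rs ≠ [] ∧ (∀ r ∈ Rs, R.simple r) ∧ C.IsSHIQConj R

def KB.IsSHIQ (K : KB) : Prop :=
  (∀ ax ∈ K.tbox, ax.1.IsSHIQ K.rbox ∧ ax.2.IsSHIQ K.rbox) ∧
  (∀ A ∈ K.abox, ∀ C ∈ A.concepts, C.IsSHIQ K.rbox)

def KB.IsSHIQConj (K : KB) : Prop :=
  (∀ ax ∈ K.tbox, ax.1.IsSHIQConj K.rbox ∧ ax.2.IsSHIQConj K.rbox) ∧
  (∀ A ∈ K.abox, ∀ C ∈ A.concepts, C.IsSHIQConj K.rbox)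

/-! ### Conjunctive queries -/

inductive Term where
  | var (v : Var)
  | ind (a : IndName)
deriving DecidableEq

inductive Atom where
  | conc (C : Concept) (t : Term)
  | rel (r : Role) (t t' : Term)
  | eq (t t' : Term)
deriving DecidableEq

/-- A (Boolean conjunctive) query, written as a finite list of atoms. -/
abbrev Query := List Atom

def Atom.terms : Atom → List Term
  | .conc _ t => [t]
  | .rel _ t t' => [t, t']
  | .eq t t' => [t, t']

def qterms (Q : Query) : List Term := (Q.map Atom.terms).flatten

def qinds (Q : Query) : List IndName :=
  (qterms Q).filterMap (fun t => match t with | .ind a => some a | _ => none)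

def qvars (Q : Query) : List Var :=
  (qterms Q).filterMap (fun t => match t with | .var v => some v | _ => none)

/-- A SHIQ conjunctive query: all concepts in concept atoms are SHIQ-concepts. -/
def QueryIsSHIQ (R : RoleBox) (Q : Query) : Prop :=
  ∀ a ∈ Q, ∀ C t, a = Atom.conc C t → C.IsSHIQ R

/-- `≈*`: the equivalence relation over terms generated by the equality atoms of `Q`. -/
inductive QEq (Q : Query) : Term → Term → Prop
  | base {t t'} : Atom.eq t t' ∈ Q → QEq Q t t'
  | refl (t) : QEq Q t t
  | symm {t t'} : QEq Q t t' → QEq Q t' t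
  | trans {t t' t''} : QEq Q t t' → QEq Q t' t'' → QEq Q t t''

/-- `r(t₁,t₂) ∈̇ Q` (role atoms modulo `≈*` and inverses). -/
def dinRel (Q : Query) (r : Role) (t₁ t₂ : Term) : Prop :=
  ∃ t₁' t₂', QEq Q t₁ t₁' ∧ QEq Q t₂ t₂' ∧
    (Atom.rel r t₁' t₂' ∈ Q ∨ Atom.rel r.inverse t₂' t₁' ∈ Q)

/-! ### Query semantics -/

/-- An evaluation: maps individual names to their interpretations and respects `≈*`. -/
def Interp.evalOK (I : Interp D) (Q : Query) (π : Term → D) : Prop :=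
  (∀ a : IndName, π (.ind a) = I.indI a) ∧ (∀ t t', QEq Q t t' → π t = π t')

def Interp.satAtom (I : Interp D) (π : Term → D) : Atom → Prop
  | .conc C t => π t ∈ C.interp I
  | .rel r t t' => (π t, π t') ∈ I.role r
  | .eq t t' => π t = π t'

def Interp.isMatch (I : Interp D) (Q : Query) (π : Term → D) : Prop :=
  I.evalOK Q π ∧ ∀ a ∈ Q, I.satAtom π a

def Interp.satQuery (I : Interp D) (Q : Query) : Prop := ∃ π, I.isMatch Q π

def Interp.satUCQ (I : Interp D) (Qs : List Query) : Prop := ∃ Q ∈ Qs, I.satQuery Q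

def KB.entails (K : KB) (Q : Query) : Prop :=
  ∀ (D : Type) (_ : Nonempty D) (I : Interp D), I.isModel K → I.satQuery Q

def KB.entailsUCQ (K : KB) (Qs : List Query) : Prop :=
  ∀ (D : Type) (_ : Nonempty D) (I : Interp D), I.isModel K → I.satUCQ Qs

def KB.entailsUCQSet (K : KB) (QS : Set Query) : Prop :=
  ∀ (D : Type) (_ : Nonempty D) (I : Interp D), I.isModel K → ∃ Q ∈ QS, I.satQuery Q

/-- Unique name assumption for the given (finitely many relevant) individual names. -/
def UNAon (I : Interp D) (ns : List IndName) : Prop :=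
  ∀ a ∈ ns, ∀ b ∈ ns, I.indI a = I.indI b → a = b

def KB.entailsUCQ_UNA (K : KB) (Qs : List Query) : Prop :=
  ∀ (D : Type) (_ : Nonempty D) (I : Interp D),
    I.isModel K → UNAon I (K.inds ++ (Qs.map qinds).flatten) → I.satUCQ Qs

def KB.ConsistentUNA (K : KB) : Prop :=
  ∃ (D : Type) (_ : Nonempty D) (I : Interp D), I.isModel K ∧ UNAon I K.inds

/-! ### Connectedness and partitionings -/

def Connected (Q : Query) : Prop :=
  ∀ t ∈ qterms Q, ∀ t' ∈ qterms Q,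
    Relation.ReflTransGen (fun x y => ∃ r, dinRel Q r x y) t t'

/-- A partitioning of `Q` into (nonempty) connected pairwise disjoint sub-queries. -/
def IsPartitioning (Q : Query) (parts : List Query) : Prop :=
  (∀ P ∈ parts, P ≠ [] ∧ Connected P) ∧
  parts.Pairwise (fun P P' => ∀ a, a ∈ P → a ∉ P') ∧
  (∀ a, a ∈ Q ↔ ∃ P ∈ parts, a ∈ P)

end DL

namespace DL

variable {D : Type}

/-! ### Trees, forest bases, canonical models -/

/-- A tree: a nonempty prefix-closed set of words over ℕ. -/
def IsTreeSet (T : Set (List ℕ)) : Prop :=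
  T.Nonempty ∧ ∀ w' ∈ T, ∀ w : List ℕ, w <+: w' → w ∈ T

def Neighbor (w w' : List ℕ) : Prop :=
  (∃ c, w' = w ++ [c]) ∨ (∃ c, w = w' ++ [c])

/-- A forest base for `K` over the domain `S ⊆ ind(A) × ℕ*`:
transitive roles are interpreted in an unrestricted way and (T1)-(T3) hold. -/
def IsForestBase (K : KB) (S : Set (IndName × List ℕ)) (J : Interp ↥S) : Prop :=
  (∀ x ∈ S, x.1 ∈ K.inds) ∧
  (∀ a ∈ K.inds, IsTreeSet {w | (a, w) ∈ S}) ∧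
  (∀ n : RoleName, ∀ x y : ↥S, (x, y) ∈ J.roleNameI n →
      (x.val.2 = [] ∧ y.val.2 = []) ∨ (x.val.1 = y.val.1 ∧ Neighbor x.val.2 y.val.2)) ∧
  (∀ a ∈ K.inds, (J.indI a).val = (a, []))

/-- `I` is canonical for `K`: it is obtained from a forest base by closing the
transitive sub-roles of every non-simple role transitively. -/
def IsCanonicalFor (K : KB) (S : Set (IndName × List ℕ)) (I : Interp ↥S) : Prop :=
  ∃ J : Interp ↥S, IsForestBase K S J ∧
    I.conceptI = J.conceptI ∧ I.indI = J.indI ∧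
    (∀ r : Role, K.rbox.simple r → I.role r = J.role r) ∧
    (∀ r : Role, ¬ K.rbox.simple r →
      I.role r = J.role r ∪ {p | ∃ s, K.rbox.sub s r ∧ K.rbox.transRole s ∧
        Relation.TransGen (fun x y => (x, y) ∈ J.role s) p.1 p.2})

/-! ### Tree-shaped queries and rolling up -/

/-- A tree mapping for `Q`: bijective modulo `≈*` onto a tree, sends individual names
to the root, and sends role atoms to neighboring nodes. -/
def IsTreeMapping (Q : Query) (f : Term → List ℕ) : Prop :=
  (∀ t ∈ qterms Q, ∀ t' ∈ qterms Q, (f t = f t' ↔ QEq Q t t')) ∧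
  IsTreeSet (f '' {t | t ∈ qterms Q}) ∧
  (∀ r t t', t ∈ qterms Q → t' ∈ qterms Q → dinRel Q r t t' → Neighbor (f t) (f t')) ∧
  (∀ a : IndName, Term.ind a ∈ qterms Q → f (Term.ind a) = [])

def IsTreeShaped (Q : Query) : Prop :=
  (qinds Q).dedup.length ≤ 1 ∧ ∃ f, IsTreeMapping Q f

def conceptConjList : List Concept → Concept :=
  fun l => l.foldr Concept.conj Concept.top

/-- The concepts asserted (in `Q`) for terms mapped to node `w`. -/
def conceptsAt (Q : Query) (f : Term → List ℕ) (w : List ℕ) : List Concept :=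
  Q.filterMap (fun a => match a with
    | Atom.conc C t => if f t = w then some C else none
    | _ => none)

/-- The roles connecting node `w` to node `w'` (modulo inverses). -/
def rolesBetween (Q : Query) (f : Term → List ℕ) (w w' : List ℕ) : List Role :=
  Q.filterMap (fun a => match a with
    | Atom.rel r t t' =>
        if f t = w ∧ f t' = w' then some r
        else if f t = w' ∧ f t' = w then some r.inverse
        else none
    | _ => none)

/-- The nodes of the tree induced by `f` on the terms of `Q`. -/
def qnodes (Q : Query) (f : Term → List ℕ) : List (List ℕ) :=
  ((qterms Q).map f).dedup

/-- Rolling up a tree-shaped query into a concept (`con(Q,·)`), by fuel recursion on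
the depth of the tree. -/
def conNode (Q : Query) (f : Term → List ℕ) : ℕ → List ℕ → Concept
  | 0, w => conceptConjList (conceptsAt Q f w)
  | (fuel + 1), w =>
      Concept.conj (conceptConjList (conceptsAt Q f w))
        (conceptConjList
          (((qnodes Q f).filter (fun w' => decide (w' ≠ [] ∧ w'.dropLast = w))).map
            (fun w' => Concept.ex (rolesBetween Q f w w') (conNode Q f fuel w'))))

/-- The query concept `con(Q, t)` of a tree-shaped query w.r.t. the root term `t`. -/
def queryConcept (Q : Query) (f : Term → List ℕ) (t : Term) : Concept :=
  conNode Q f (qterms Q).length (f t)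

/-! ### Collapsings -/

def IsCollapsing (Q Qco : Query) : Prop :=
  ∃ E : Query, (∀ a ∈ E, ∃ t t', a = Atom.eq t t' ∧ t ∈ qterms Q ∧ t' ∈ qterms Q) ∧
    Qco = Q ++ E

def InjectiveModEq (Q : Query) (π : Term → D) : Prop :=
  ∀ t ∈ qterms Q, ∀ t' ∈ qterms Q, π t = π t' → QEq Q t t'

/-! ### Root choices and root splittings -/

def IsRootChoice (Q : Query) (Roots : Set Term) : Prop :=
  (∀ t ∈ Roots, t ∈ qterms Q) ∧
  (∀ a : IndName, Term.ind a ∈ qterms Q → Term.ind a ∈ Roots) ∧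
  (∀ t ∈ Roots, ∀ t', QEq Q t t' → t' ∈ qterms Q → t' ∈ Roots)

/-- The terms reachable from `t` without passing through a root not equivalent to `t`. -/
def reach (Q : Query) (Roots : Set Term) (t : Term) : Set Term :=
  {t' | Relation.ReflTransGen
    (fun x y => (∃ r, dinRel Q r x y) ∧ (y ∈ Roots → QEq Q y t)) t t'}

def IsRootSplitting (Q : Query) (Roots : Set Term) : Prop :=
  IsRootChoice Q Roots ∧
  (Roots = ∅ ∨ ∀ t ∈ Roots, ∀ t' ∈ Roots, ¬ QEq Q t t' →
    reach Q Roots t ∩ reach Q Roots t' = ∅)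

/-- The sub-query `sq(Q, t)` induced by a root `t` (loops at `t` excluded). -/
noncomputable def sq (Q : Query) (Roots : Set Term) (t : Term) : Query :=
  Q.filter (fun a => decide ((∀ u ∈ a.terms, u ∈ reach Q Roots t) ∧
    ¬ ∃ r u u', a = Atom.rel r u u' ∧ QEq Q u t ∧ QEq Q u' t))

def IsForestShaped (Q : Query) (Roots : Set Term) : Prop :=
  (Roots = ∅ ∧ IsTreeShaped Q) ∨ (∀ t ∈ Roots, IsTreeShaped (sq Q Roots t))

/-! ### Split rewritings -/

def Term.isVar : Term → Prop
  | .var _ => True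
  | .ind _ => False

inductive SplitStep (R : RoleBox) : Atom → List Atom → Prop
  | keep (a : Atom) : SplitStep R a [a]
  | two {r s : Role} {t t' u : Term} :
      R.transRole s → R.sub s r → u.isVar →
      SplitStep R (Atom.rel r t t') [Atom.rel s t u, Atom.rel s u t']
  | three {r s : Role} {t t' u u' : Term} :
      R.transRole s → R.sub s r → u.isVar → u'.isVar →
      SplitStep R (Atom.rel r t t') [Atom.rel s t u, Atom.rel s u u', Atom.rel s u' t']

def IsSplitRewriting (R : RoleBox) (Q Qsr : Query) : Prop :=
  ∃ L : List (List Atom), List.Forall₂ (SplitStep R) Q L ∧ Qsr = L.flatten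

/-- `sr_K(Q)`: split rewritings of collapsings of `Q`, with a root splitting. -/
def srK (K : KB) (Q : Query) : Set (Query × Set Term) :=
  {p | ∃ Qco, IsCollapsing Q Qco ∧ IsSplitRewriting K.rbox Qco p.1 ∧
    IsRootSplitting p.1 p.2}

/-- A split match into a canonical interpretation. -/
def IsSplitMatch {S : Set (IndName × List ℕ)} (Q : Query) (π : Term → ↥S) : Prop :=
  ∀ r t t', Atom.rel r t t' ∈ Q →
    ((π t).val.2 = [] ∧ (π t').val.2 = []) ∨ (π t).val.1 = (π t').val.1

/-- The root splitting induced by a split match. -/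
def inducedRoots {S : Set (IndName × List ℕ)} (Q : Query) (π : Term → ↥S) : Set Term :=
  {t | t ∈ qterms Q ∧ (π t).val.2 = []}

/-! ### Loop rewritings -/

inductive LoopStep (R : RoleBox) (Roots : Set Term) : Atom → List Atom → Prop
  | keep (a : Atom) (h : ∀ r t, a = Atom.rel r t t → t ∈ Roots) : LoopStep R Roots a [a]
  | loop {r s : Role} {t t' : Term} :
      t ∉ Roots → R.transRole s → R.sub s r → t'.isVar →
      LoopStep R Roots (Atom.rel r t t) [Atom.rel s t t', Atom.rel s t' t]

def IsLoopRewriting (R : RoleBox) (Roots : Set Term) (Q Qlr : Query) : Prop :=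
  ∃ L : List (List Atom), List.Forall₂ (LoopStep R Roots) Q L ∧ Qlr = L.flatten

def lrK (K : KB) (Q : Query) : Set (Query × Set Term) :=
  {p | ∃ Qsr, (Qsr, p.2) ∈ srK K Q ∧ IsLoopRewriting K.rbox p.2 Qsr p.1}

/-! ### Forest rewritings -/

def chainAtoms (s : Role) : List Term → List Atom
  | x :: y :: rest => Atom.rel s x y :: chainAtoms s (y :: rest)
  | _ => []

/-- Whether an atom belongs to a tree part of `Q` w.r.t. the root splitting. -/
def InTreePart (Q : Query) (Roots : Set Term) (a : Atom) : Prop :=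
  Roots = ∅ ∨ ∃ t ∈ Roots, a ∈ sq Q Roots t

inductive ForestStep (R : RoleBox) (Vars : Set Term) (maxlen : ℕ) : Atom → List Atom → Prop
  | keep (a : Atom) : ForestStep R Vars maxlen a [a]
  | chain {r s : Role} {t t' : Term} (ts : List Term) :
      R.transRole s → R.sub s r →
      2 ≤ ts.length → ts.length ≤ maxlen + 1 →
      ts.head? = some t → ts.getLast? = some t' →
      (∀ u ∈ (ts.drop 1).dropLast, u ∈ Vars) →
      ForestStep R Vars maxlen (Atom.rel r t t') (chainAtoms s ts)

def IsForestRewriting (K : KB) (Roots : Set Term) (Q Qfr : Query) : Prop :=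
  ∃ V : List Var, V.length ≤ (qvars Q).dedup.length ∧
    (∀ v ∈ V, Term.var v ∉ qterms Q) ∧
    ∃ L : List (List Atom),
      List.Forall₂ (fun a l =>
        ForestStep K.rbox
          {u | (∃ v ∈ qvars Q, u = Term.var v) ∨ (∃ v ∈ V, u = Term.var v)}
          (qvars Q).dedup.length a l ∧
        (l ≠ [a] → InTreePart Q Roots a)) Q L ∧
      Qfr = L.flatten

/-- `fr_K(Q)`: forest-shaped forest rewritings of loop rewritings of `Q`. -/
def frK (K : KB) (Q : Query) : Set (Query × Set Term) :=
  {p | ∃ Qlr, (Qlr, p.2) ∈ lrK K Q ∧ IsForestRewriting K p.2 Qlr p.1 ∧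
    IsForestShaped p.1 p.2}

/-- A forest match: a split match such that within each tree the images of each
root-induced sub-query can be mapped bijectively to a tree with role atoms
relating neighbors. -/
def IsForestMatch {S : Set (IndName × List ℕ)} (Q : Query) (π : Term → ↥S) : Prop :=
  IsSplitMatch Q π ∧
  ∀ tr ∈ qterms Q, ∀ a : IndName, (π tr).val = (a, []) →
    ∃ g : IndName × List ℕ → List ℕ,
      Set.InjOn g {d | (∃ t ∈ qterms Q, (π t).val = d) ∧ d.1 = a} ∧
      IsTreeSet (g '' {d | (∃ t ∈ qterms Q, (π t).val = d) ∧ d.1 = a}) ∧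
      (∀ r t t', Atom.rel r t t' ∈ sq Q (inducedRoots Q π) tr →
        Neighbor (g (π t).val) (g (π t').val))

def IsTreeMatch {S : Set (IndName × List ℕ)} (Q : Query) (π : Term → ↥S) : Prop :=
  IsForestMatch Q π ∧ ∃ a : IndName, ∀ t ∈ qterms Q, (π t).val.1 = a

end DL

namespace DL

variable {D : Type}

/-! ### Groundings and tree queries -/

/-- `trees_K(Q)`: single-concept-atom queries obtained by rolling up tree-shaped
forest rewritings with empty root splitting. -/
def treesK (K : KB) (Q : Query) : Set Query :=
  {Q' | ∃ Qfr, (Qfr, (∅ : Set Term)) ∈ frK K Q ∧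
    ∃ (v : Var) (f : Term → List ℕ), Term.var v ∈ qterms Qfr ∧
      IsTreeMapping Qfr f ∧ f (Term.var v) = [] ∧
      Q' = [Atom.conc (queryConcept Qfr f (Term.var v)) (Term.var v)]}

/-- A ground mapping `τ` for a root splitting w.r.t. the ABox of `K`. -/
def IsGroundMapping (K : KB) (Q : Query) (Roots : Set Term) (τ : Term → IndName) : Prop :=
  (∀ a : IndName, Term.ind a ∈ Roots → τ (Term.ind a) = a) ∧
  (∀ t ∈ Roots, τ t ∈ K.inds) ∧
  (∀ t ∈ Roots, ∀ t' ∈ Roots, (τ t = τ t' ↔ QEq Q t t'))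

noncomputable def substRoots (Roots : Set Term) (τ : Term → IndName) (t : Term) : Term :=
  if t ∈ Roots then Term.ind (τ t) else t

def Atom.subst (σ : Term → Term) : Atom → Atom
  | .conc C t => .conc C (σ t)
  | .rel r t t' => .rel r (σ t) (σ t')
  | .eq t t' => .eq (σ t) (σ t')

/-- The ground query obtained from a forest-shaped query by replacing roots with
individual names and rolling up each tree sub-query into a concept atom. -/
def IsGrounding (Qfr : Query) (Roots : Set Term) (τ : Term → IndName) (Q' : Query) : Prop :=
  ∃ (reps : List Term) (g : Term → (Term → List ℕ)),
    (∀ t ∈ reps, t ∈ Roots) ∧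
    (∀ t ∈ Roots, ∃ t' ∈ reps, QEq Qfr t t') ∧
    reps.Pairwise (fun t t' => ¬ QEq Qfr t t') ∧
    (∀ t ∈ reps, IsTreeMapping (sq Qfr Roots t) (g t) ∧ g t t = []) ∧
    Q' = (Qfr.filter (fun a => decide ((∀ u ∈ a.terms, u ∈ Roots) ∧
            ∀ t ∈ Roots, a ∉ sq Qfr Roots t))).map (Atom.subst (substRoots Roots τ))
         ++ reps.map (fun t =>
              Atom.conc (queryConcept (sq Qfr Roots t) (g t) t) (Term.ind (τ t)))

/-- `groundings_K(Q)`: ground queries for `Q` w.r.t. `K`. -/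
def groundingsK (K : KB) (Q : Query) : Set Query :=
  {Q' | ∃ (Qfr : Query) (Roots : Set Term) (τ : Term → IndName), (Qfr, Roots) ∈ frK K Q ∧ Roots ≠ ∅ ∧
    IsGroundMapping K Qfr Roots τ ∧ IsGrounding Qfr Roots τ Q'}

/-! ### Extended knowledge bases -/

/-- The ABox assertion negating a ground query atom. -/
def negAtom : Atom → Option Assertion
  | .conc C (Term.ind a) => some (Assertion.conc (Concept.neg C) a)
  | .rel r (Term.ind a) (Term.ind b) => some (Assertion.nrel r a b)
  | .eq (Term.ind a) (Term.ind b) => some (Assertion.neq a b)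
  | _ => none

/-- An extended knowledge base w.r.t. `K` and the UCQ `Qs`. -/
def IsExtendedKB (K : KB) (Qs : List Query) (K' : KB) : Prop :=
  K'.rbox = K.rbox ∧
  (∀ ax, ax ∈ K'.tbox ↔ (ax ∈ K.tbox ∨
    ∃ (C : Concept) (v : Var), (∃ Qi ∈ Qs, [Atom.conc C (Term.var v)] ∈ treesK K Qi) ∧
      ax = (Concept.top, Concept.neg C))) ∧
  (∀ A ∈ K.abox, A ∈ K'.abox) ∧
  (∀ A ∈ K'.abox, A ∈ K.abox ∨
    ∃ Qi ∈ Qs, ∃ Q' ∈ groundingsK K Qi, ∃ a ∈ Q', negAtom a = some A) ∧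
  (∀ Qi ∈ Qs, ∀ Q' ∈ groundingsK K Qi,
    ∃ a ∈ Q', ∃ A, negAtom a = some A ∧ A ∈ K'.abox)

/-! ### Sizes (numbers coded in binary) -/

def Role.size : Role → ℕ
  | .name _ => 1
  | .inv _ => 2

def rolesSize (Rs : List Role) : ℕ := (Rs.map Role.size).sum + 1

def Concept.size : Concept → ℕ
  | .top => 1
  | .bot => 1
  | .atom _ => 1
  | .neg C => C.size + 1
  | .conj C C' => C.size + C'.size + 1
  | .disj C C' => C.size + C'.size + 1
  | .all Rs C => rolesSize Rs + C.size + 1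
  | .ex Rs C => rolesSize Rs + C.size + 1
  | .atmost n Rs C => Nat.size n + rolesSize Rs + C.size + 1
  | .atleast n Rs C => Nat.size n + rolesSize Rs + C.size + 1

def Atom.size : Atom → ℕ
  | .conc C _ => C.size + 2
  | .rel r _ _ => r.size + 3
  | .eq _ _ => 3

def qsize (Q : Query) : ℕ := (Q.map Atom.size).sum + 1

def ucqSize (Qs : List Query) : ℕ := (Qs.map qsize).sum + 1

def Assertion.size : Assertion → ℕ
  | .conc C _ => C.size + 2
  | .rel r _ _ => r.size + 3
  | .nrel r _ _ => r.size + 4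
  | .neq _ _ => 3

def aboxSize (A : List Assertion) : ℕ := (A.map Assertion.size).sum + 1

def RoleBox.size (R : RoleBox) : ℕ :=
  (R.incl.map (fun p => p.1.size + p.2.size + 1)).sum + R.trans.length + 1

def KB.size (K : KB) : ℕ :=
  (K.tbox.map (fun p => p.1.size + p.2.size + 1)).sum + K.rbox.size + aboxSize K.abox

/-- Maximal length of a role conjunction occurring in a concept. -/
def Concept.maxConj : Concept → ℕ
  | .top => 0
  | .bot => 0
  | .atom _ => 0
  | .neg C => C.maxConj
  | .conj C C' => max C.maxConj C'.maxConj
  | .disj C C' => max C.maxConj C'.maxConj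
  | .all Rs C => max Rs.length C.maxConj
  | .ex Rs C => max Rs.length C.maxConj
  | .atmost _ Rs C => max Rs.length C.maxConj
  | .atleast _ Rs C => max Rs.length C.maxConj

def KB.maxConjLen (K : KB) : ℕ :=
  ((K.tbox.map (fun p => max p.1.maxConj p.2.maxConj)) ++
    (K.abox.map (fun A => ((A.concepts.map Concept.maxConj).foldr max 0)))).foldr max 0

/-! ### Query isomorphism (renaming of variables) -/

def Term.rename (σ : Var → Var) : Term → Term
  | .var v => .var (σ v)
  | .ind a => .ind a

def QueryEquiv (Q Q' : Query) : Prop :=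
  ∃ σ : Var → Var, Function.Bijective σ ∧
    ∀ a, a ∈ Q' ↔ ∃ b ∈ Q, a = b.subst (Term.rename σ)

/-! ### Replacing individual names (for A-partitions) -/

def Term.mapInd (f : IndName → IndName) : Term → Term
  | .var v => .var v
  | .ind a => .ind (f a)

def queryMapInd (f : IndName → IndName) (Q : Query) : Query :=
  Q.map (Atom.subst (Term.mapInd f))

def Assertion.mapInd (f : IndName → IndName) : Assertion → Assertion
  | .conc C a => .conc C (f a)
  | .rel r a b => .rel r (f a) (f b)
  | .nrel r a b => .nrel r (f a) (f b)
  | .neq a b => .neq (f a) (f b)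

def KB.mapInd (f : IndName → IndName) (K : KB) : KB :=
  ⟨K.tbox, K.rbox, K.abox.map (Assertion.mapInd f)⟩

/-- A representative map for a partition of the individual names in `names`:
an idempotent map fixing everything outside `names`. -/
def IsRepMap (names : List IndName) (f : IndName → IndName) : Prop :=
  (∀ a, f (f a) = f a) ∧ (∀ a ∈ names, f a ∈ names) ∧ (∀ a, a ∉ names → f a = a)

end DL

namespace DL

variable {D : Type}

/-! ### Negation normal form -/

def Concept.IsNNF : Concept → Prop
  | .top => True
  | .bot => True
  | .atom _ => True
  | .neg (.atom _) => True
  | .neg _ => False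
  | .conj C C' => C.IsNNF ∧ C'.IsNNF
  | .disj C C' => C.IsNNF ∧ C'.IsNNF
  | .all _ C => C.IsNNF
  | .ex _ C => C.IsNNF
  | .atmost _ _ C => C.IsNNF
  | .atleast _ _ C => C.IsNNF

/-- `nnfAux C true` is the NNF of `C`; `nnfAux C false` is the NNF `˙¬C` of `¬C`. -/
def Concept.nnfAux : Concept → Bool → Concept
  | .top, true => .top
  | .top, false => .bot
  | .bot, true => .bot
  | .bot, false => .top
  | .atom A, true => .atom A
  | .atom A, false => .neg (.atom A)
  | .neg C, b => C.nnfAux !b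
  | .conj C C', true => .conj (C.nnfAux true) (C'.nnfAux true)
  | .conj C C', false => .disj (C.nnfAux false) (C'.nnfAux false)
  | .disj C C', true => .disj (C.nnfAux true) (C'.nnfAux true)
  | .disj C C', false => .conj (C.nnfAux false) (C'.nnfAux false)
  | .all Rs C, true => .all Rs (C.nnfAux true)
  | .all Rs C, false => .ex Rs (C.nnfAux false)
  | .ex Rs C, true => .ex Rs (C.nnfAux true)
  | .ex Rs C, false => .all Rs (C.nnfAux false)
  | .atmost n Rs C, true => .atmost n Rs (C.nnfAux true)
  | .atmost n Rs C, false => .atleast (n + 1) Rs (C.nnfAux true)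
  | .atleast n Rs C, true => .atleast n Rs (C.nnfAux true)
  | .atleast 0 _ _, false => .bot
  | .atleast (n + 1) Rs C, false => .atmost n Rs (C.nnfAux true)

def Concept.usesName (A : ConceptName) : Concept → Prop
  | .top => False
  | .bot => False
  | .atom B => B = A
  | .neg C => C.usesName A
  | .conj C C' => C.usesName A ∨ C'.usesName A
  | .disj C C' => C.usesName A ∨ C'.usesName A
  | .all _ C => C.usesName A
  | .ex _ C => C.usesName A
  | .atmost _ _ C => C.usesName A
  | .atleast _ _ C => C.usesName A

/-! ### The closure cl(C,R) and the translation to ALCQIb -/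

inductive IsSub : Concept → Concept → Prop
  | refl (C) : IsSub C C
  | negc {E C} : IsSub E C → IsSub E (Concept.neg C)
  | conjl {E C C'} : IsSub E C → IsSub E (Concept.conj C C')
  | conjr {E C C'} : IsSub E C' → IsSub E (Concept.conj C C')
  | disjl {E C C'} : IsSub E C → IsSub E (Concept.disj C C')
  | disjr {E C C'} : IsSub E C' → IsSub E (Concept.disj C C')
  | alls {E Rs C} : IsSub E C → IsSub E (Concept.all Rs C)
  | exs {E Rs C} : IsSub E C → IsSub E (Concept.ex Rs C)
  | atmosts {E n Rs C} : IsSub E C → IsSub E (Concept.atmost n Rs C)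
  | atleasts {E n Rs C} : IsSub E C → IsSub E (Concept.atleast n Rs C)

/-- The closure `cl(C₀, R)`. -/
inductive Cl (C₀ : Concept) (R : RoleBox) : Concept → Prop
  | base {E} : IsSub E C₀ → Cl C₀ R E
  | negnnf {E} : Cl C₀ R E → Cl C₀ R (E.nnfAux false)
  | transAll {Rs E Ts} : Cl C₀ R (Concept.all Rs E) →
      List.Forall₂ (fun t r => R.sub t r ∧ R.transRole t) Ts Rs →
      Cl C₀ R (Concept.all Ts E)

/-- All roles syntactically occurring in the role hierarchy, closed under inverse. -/
def RoleBox.allRoles (R : RoleBox) : List Role :=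
  (R.incl.map Prod.fst) ++ (R.incl.map Prod.snd) ++
  (R.incl.map (fun p => p.1.inverse)) ++ (R.incl.map (fun p => p.2.inverse))

/-- `↑r`: the conjunction (list) of all super-roles of `r`, including `r`. -/
noncomputable def upRole (R : RoleBox) (r : Role) : List Role :=
  (r :: R.allRoles.filter (fun s => decide (R.sub r s))).dedup

noncomputable def upConj (R : RoleBox) (Rs : List Role) : List Role :=
  (Rs.map (upRole R)).flatten

/-- The translation `tr` from SHIQ^⊓ (in NNF) to ALCQIb, with `X` the supply of
fresh concept names for universal restrictions. -/
noncomputable def trC (R : RoleBox) (X : List Role → Concept → ConceptName) :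
    Concept → Concept
  | .top => .top
  | .bot => .bot
  | .atom A => .atom A
  | .neg C => .neg (trC R X C)
  | .conj C C' => .conj (trC R X C) (trC R X C')
  | .disj C C' => .disj (trC R X C) (trC R X C')
  | .atmost n Rs C => .atmost n (upConj R Rs) (trC R X C)
  | .atleast n Rs C => .atleast n (upConj R Rs) (trC R X C)
  | .all Rs C => .atom (X Rs C)
  | .ex Rs C => .neg (.atom (X Rs (C.nnfAux false)))

/-- The TBox `T_{C₀,R}` of the translation. -/
noncomputable def TCR (C₀ : Concept) (R : RoleBox)
    (X : List Role → Concept → ConceptName) : Set (Concept × Concept) :=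
  {ax | ∃ Rs E, Cl C₀ R (Concept.all Rs E) ∧
    (ax = (Concept.atom (X Rs E), Concept.all (upConj R Rs) (trC R X E)) ∨
     ax = (Concept.all (upConj R Rs) (trC R X E), Concept.atom (X Rs E)) ∨
     ∃ Ts, List.Forall₂ (fun t r => R.sub t r ∧ R.transRole t) Ts Rs ∧
       ax = (Concept.atom (X Rs E), Concept.all (upConj R Ts) (Concept.atom (X Ts E))))}

/-- Satisfiability of a concept w.r.t. a role hierarchy (transitive role names
interpreted transitively). -/
def SatWrtRBox (C : Concept) (R : RoleBox) : Prop :=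
  ∃ (D : Type) (_ : Nonempty D) (I : Interp D), I.satRBox R ∧ (C.interp I).Nonempty

/-- ALCQIb satisfiability of a concept w.r.t. a (possibly infinite) TBox:
no role hierarchy and no transitivity assumptions. -/
def SatWrtTBoxSet (C : Concept) (T : Set (Concept × Concept)) : Prop :=
  ∃ (D : Type) (_ : Nonempty D) (I : Interp D),
    (∀ ax ∈ T, ax.1.interp I ⊆ ax.2.interp I) ∧ (C.interp I).Nonempty

/-! ### Abstract algorithms and complexity classes -/

/-- An abstract decision problem: an instance type with a size measure and a
membership predicate. -/
structure DecisionProblem : Type 1 where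
  α : Type
  size : α → ℕ
  mem : α → Prop

/-- `P` is decidable by a deterministic algorithm within time bound `T` (as a
function of the instance size). -/
def DecidesInTime (P : DecisionProblem) (T : ℕ → ℕ) : Prop :=
  ∃ (f : P.α → Bool) (cost : P.α → ℕ),
    (∀ a, f a = true ↔ P.mem a) ∧ (∀ a, cost a ≤ T (P.size a))

def InTwoExpTime (P : DecisionProblem) : Prop :=
  ∃ p : Polynomial ℕ, DecidesInTime P (fun s => 2 ^ (2 ^ (p.eval s)))

/-- Polynomial-time (many-one) reducibility. -/
def PolyTimeReducible (P Q : DecisionProblem) : Prop :=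
  ∃ (g : P.α → Q.α) (cost : P.α → ℕ) (p : Polynomial ℕ),
    (∀ a, P.mem a ↔ Q.mem (g a)) ∧
    (∀ a, Q.size (g a) ≤ p.eval (P.size a)) ∧
    (∀ a, cost a ≤ p.eval (P.size a))

def TwoExpTimeComplete (P : DecisionProblem) : Prop :=
  InTwoExpTime P ∧ ∀ Q : DecisionProblem, InTwoExpTime Q → PolyTimeReducible Q P

/-- Nondeterministic polynomial time: a polynomially bounded certificate/verifier
characterization. -/
def InNP (P : DecisionProblem) : Prop :=
  ∃ (p : Polynomial ℕ) (V : P.α → List Bool → Bool),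
    ∀ a, P.mem a ↔ ∃ c : List Bool, c.length ≤ p.eval (P.size a) ∧ V a c = true

def DecisionProblem.complement (P : DecisionProblem) : DecisionProblem :=
  ⟨P.α, P.size, fun a => ¬ P.mem a⟩

def InCoNP (P : DecisionProblem) : Prop := InNP P.complement

def CoNPComplete (P : DecisionProblem) : Prop :=
  InCoNP P ∧ ∀ Q : DecisionProblem, InCoNP Q → PolyTimeReducible Q P

end DL

/-! Reinterpreting each individual name `a` as `f a` has the same effect as renaming the ABox
and the queries by `f`: models and matches correspond. Given a model `I` of `K` refuting `Q`,
let `f` send each ABox name to a fixed ABox name with the same interpretation; then `I` itself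
is a model of the renamed knowledge base that refutes the renamed query and interprets the
remaining names injectively. Conversely, non-entailment after renaming, even without the unique
name assumption, transfers back to `K` and `Q`. -/

namespace DL

variable {D : Type}

def Interp.withInd (I : Interp D) (g : IndName → D) : Interp D :=
  ⟨I.conceptI, I.roleNameI, g⟩

@[simp]
lemma Interp.conceptI_withInd (I : Interp D) (g : IndName → D) :
    (I.withInd g).conceptI = I.conceptI := rfl

@[simp]
lemma Interp.roleNameI_withInd (I : Interp D) (g : IndName → D) :
    (I.withInd g).roleNameI = I.roleNameI := rfl

@[simp]
lemma Interp.indI_withInd (I : Interp D) (g : IndName → D) :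
    (I.withInd g).indI = g := rfl

@[simp]
lemma Interp.role_withInd (I : Interp D) (g : IndName → D) : (I.withInd g).role = I.role := by
  funext r
  cases r <;> rfl

@[simp]
lemma Interp.roleConj_withInd (I : Interp D) (g : IndName → D) :
    (I.withInd g).roleConj = I.roleConj := by
  funext Rs
  simp [Interp.roleConj]

@[simp]
lemma Concept.interp_withInd (I : Interp D) (g : IndName → D) (C : Concept) :
    C.interp (I.withInd g) = C.interp I := by
  induction C <;> simp_all [Concept.interp]

lemma Interp.satAssertion_mapInd (I : Interp D) (f : IndName → IndName) (A : Assertion) :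
    I.satAssertion (A.mapInd f) ↔ (I.withInd (I.indI ∘ f)).satAssertion A := by
  cases A <;> simp [Interp.satAssertion, Assertion.mapInd]

lemma Interp.isModel_mapInd (I : Interp D) (f : IndName → IndName) (K : KB) :
    I.isModel (K.mapInd f) ↔ (I.withInd (I.indI ∘ f)).isModel K := by
  simp [Interp.isModel, Interp.satRBox, KB.mapInd, Interp.satAssertion_mapInd]

lemma Interp.satAtom_subst_mapInd (I : Interp D) (π : Term → D) (f : IndName → IndName)
    (b : Atom) :
    I.satAtom π (b.subst (Term.mapInd f)) ↔
      (I.withInd (I.indI ∘ f)).satAtom (π ∘ Term.mapInd f) b := by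
  cases b <;> simp [Interp.satAtom, Atom.subst]

lemma QEq.eq_of_forall_eq_mem {Q : Query} {π : Term → D}
    (h : ∀ t t', Atom.eq t t' ∈ Q → π t = π t') {t t' : Term} (hq : QEq Q t t') :
    π t = π t' := by
  induction hq with
  | base hb => exact h _ _ hb
  | refl => rfl
  | symm _ ih => exact ih.symm
  | trans _ _ ih ih' => exact ih.trans ih'

/-- Respecting `≈*` is automatic for an assignment satisfying all atoms, equality atoms
included. -/
lemma Interp.isMatch_of_forall_satAtom (I : Interp D) {Q : Query} {π : Term → D}
    (hind : ∀ a, π (.ind a) = I.indI a) (hsat : ∀ b ∈ Q, I.satAtom π b) : I.isMatch Q π :=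
  ⟨⟨hind, fun _ _ => QEq.eq_of_forall_eq_mem fun _ _ hu => hsat _ hu⟩, hsat⟩

lemma Interp.satQuery_queryMapInd (I : Interp D) (f : IndName → IndName) (Q : Query) :
    I.satQuery (queryMapInd f Q) ↔ (I.withInd (I.indI ∘ f)).satQuery Q := by
  constructor
  · rintro ⟨π, ⟨hind, -⟩, hsat⟩
    refine ⟨π ∘ Term.mapInd f, Interp.isMatch_of_forall_satAtom _ (fun a => hind (f a)) ?_⟩
    exact fun b hb => (I.satAtom_subst_mapInd π f b).1 (hsat _ (List.mem_map_of_mem hb))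
  · rintro ⟨π, ⟨hind, -⟩, hsat⟩
    let π' : Term → D
      | .ind a => I.indI a
      | .var v => π (.var v)
    have hπ' : π' ∘ Term.mapInd f = π := by
      funext t
      cases t with
      | var v => rfl
      | ind a => exact (hind a).symm
    refine ⟨π', Interp.isMatch_of_forall_satAtom _ (fun _ => rfl) ?_⟩
    intro b' hb'
    obtain ⟨b, hb, rfl⟩ := List.mem_map.mp hb'
    exact (I.satAtom_subst_mapInd π' f b).2 (hπ' ▸ hsat b hb)

lemma Interp.satUCQ_map_queryMapInd (I : Interp D) (f : IndName → IndName) (Qs : List Query) :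
    I.satUCQ (Qs.map (queryMapInd f)) ↔ (I.withInd (I.indI ∘ f)).satUCQ Qs := by
  simp [Interp.satUCQ, Interp.satQuery_queryMapInd]

lemma KB.entailsUCQ.mapInd {K : KB} {Qs : List Query} (h : K.entailsUCQ Qs)
    (f : IndName → IndName) : (K.mapInd f).entailsUCQ (Qs.map (queryMapInd f)) :=
  fun D hD I hI =>
    (I.satUCQ_map_queryMapInd f Qs).2 (h D hD _ ((I.isModel_mapInd f K).1 hI))

lemma KB.entailsUCQ.entailsUCQ_UNA {K : KB} {Qs : List Query} (h : K.entailsUCQ Qs) :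
    K.entailsUCQ_UNA Qs :=
  fun D hD I hI _ => h D hD I hI

lemma UNAon.mono {I : Interp D} {ns ms : List IndName} (h : ns ⊆ ms) (hms : UNAon I ms) :
    UNAon I ns :=
  fun a ha b hb => hms a (h ha) b (h hb)

section RepresentativeMap

variable (names : List IndName) (g : IndName → D)

noncomputable def repMap (a : IndName) : IndName :=
  if a ∈ names then Classical.epsilon (fun b => b ∈ names ∧ g b = g a) else a

variable {names g}

lemma repMap_spec {a : IndName} (ha : a ∈ names) :
    repMap names g a ∈ names ∧ g (repMap names g a) = g a := by
  rw [repMap, if_pos ha]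
  exact Classical.epsilon_spec (p := fun b => b ∈ names ∧ g b = g a) ⟨a, ha, rfl⟩

lemma repMap_eq_repMap {a b : IndName} (ha : a ∈ names) (hb : b ∈ names) (h : g a = g b) :
    repMap names g a = repMap names g b := by
  simp [repMap, ha, hb, h]

variable (names g)

lemma comp_repMap : g ∘ repMap names g = g := by
  funext a
  by_cases ha : a ∈ names
  · exact (repMap_spec ha).2
  · simp [repMap, ha]

lemma isRepMap_repMap : IsRepMap names (repMap names g) := by
  refine ⟨fun a => ?_, fun a ha => (repMap_spec ha).1, fun a ha => by simp [repMap, ha]⟩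
  by_cases ha : a ∈ names
  · exact repMap_eq_repMap (repMap_spec ha).1 ha (repMap_spec ha).2
  · simp [repMap, ha]

lemma unaOn_map_repMap (I : Interp D) : UNAon I (names.map (repMap names I.indI)) := by
  simp only [UNAon, List.mem_map]
  rintro _ ⟨a, ha, rfl⟩ _ ⟨b, hb, rfl⟩ hab
  have hg : ∀ x, I.indI (repMap names I.indI x) = I.indI x := congrFun (comp_repMap names I.indI)
  rw [hg, hg] at hab
  exact repMap_eq_repMap ha hb hab

end RepresentativeMap

lemma KB.inds_mapInd (f : IndName → IndName) (K : KB) : (K.mapInd f).inds = K.inds.map f := by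
  have hA : ∀ A : Assertion, (A.mapInd f).inds = A.inds.map f := by
    intro A
    cases A <;> rfl
  simp [KB.inds, KB.mapInd, List.map_flatten, Function.comp_def, hA]

lemma qterms_queryMapInd (f : IndName → IndName) (Q : Query) :
    qterms (queryMapInd f Q) = (qterms Q).map (Term.mapInd f) := by
  have hterms : ∀ b : Atom, (b.subst (Term.mapInd f)).terms = b.terms.map (Term.mapInd f) := by
    intro b
    cases b <;> rfl
  simp [qterms, queryMapInd, List.map_flatten, Function.comp_def, hterms]

lemma qinds_queryMapInd (f : IndName → IndName) (Q : Query) :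
    qinds (queryMapInd f Q) = (qinds Q).map f := by
  rw [qinds, qinds, qterms_queryMapInd, List.filterMap_map, List.map_filterMap]
  congr 1
  funext t
  cases t <;> rfl

lemma names_mapInd_subset {K : KB} {Qs : List Query}
    (hocc : ∀ Q ∈ Qs, ∀ a ∈ qinds Q, a ∈ K.inds) (f : IndName → IndName) :
    (K.mapInd f).inds ++ ((Qs.map (queryMapInd f)).map qinds).flatten ⊆ K.inds.map f := by
  intro x hx
  simp only [KB.inds_mapInd, List.mem_append, List.mem_flatten, List.map_map, List.mem_map,
    Function.comp_apply, qinds_queryMapInd] at hx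
  rcases hx with hx | ⟨_, ⟨Q, hQ, rfl⟩, hx⟩
  · exact List.mem_map.mpr hx
  · obtain ⟨a, ha, rfl⟩ := List.mem_map.mp hx
    exact List.mem_map_of_mem (hocc Q hQ a ha)

theorem statement15_general (K : KB) (Qs : List Query)
    (hocc : ∀ Q ∈ Qs, ∀ a ∈ qinds Q, a ∈ K.inds) :
    ¬ K.entailsUCQ Qs ↔
      ∃ f : IndName → IndName, IsRepMap K.inds f ∧
        ¬ (K.mapInd f).entailsUCQ_UNA (Qs.map (queryMapInd f)) := by
  constructor
  · simp only [KB.entailsUCQ, not_forall]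
    rintro ⟨D, hD, I, hI, hQs⟩
    set f := repMap K.inds I.indI
    have hIf : I.withInd (I.indI ∘ f) = I := by rw [comp_repMap]; rfl
    refine ⟨f, isRepMap_repMap _ _, fun hent => hQs ?_⟩
    have hsat := hent D hD I (by rwa [Interp.isModel_mapInd, hIf])
      ((unaOn_map_repMap K.inds I).mono (names_mapInd_subset hocc f))
    rwa [Interp.satUCQ_map_queryMapInd, hIf] at hsat
  · rintro ⟨f, -, hne⟩ hent
    exact hne (hent.mapInd f).entailsUCQ_UNA

/-- KB does not entail the UCQ Q without the unique name assumption
iff there is an A-partition (represented by an idempotent representative map on the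
individual names of the ABox) such that the resulting knowledge base does not entail
the resulting query under the unique name assumption. -/
theorem statement15 (K : KB) (hK : K.IsSHIQ) (Qs : List Query)
    (hQs : ∀ Q ∈ Qs, Q ≠ [] ∧ QueryIsSHIQ K.rbox Q)
    (hocc : ∀ Q ∈ Qs, ∀ a ∈ qinds Q, a ∈ K.inds) :
    ¬ K.entailsUCQ Qs ↔
      ∃ f : IndName → IndName, IsRepMap K.inds f ∧
        ¬ (K.mapInd f).entailsUCQ_UNA (Qs.map (queryMapInd f)) :=
  statement15_general K Qs hocc

end DL
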